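/- Let τ > 1, Δt_1 > 0 and Δt_n = Δt_1 τ^{n−1} for n = 1,…,N_t (geometrically increasing step sizes), and let B = B_2^{-1}B_1 be the Trapezoidal-rule time-stepping matrix (the θ-method matrix with θ = 1/2). Then B is diagonalizable as B = V D V^{-1}, where D = diag(2/Δt_1, …, 2/Δt_{N_t}) and V is the unit lower triangular Toeplitz matrix with entries V_{jk} = p_{j−k} for j ≥ k, given by p_0 = 1 and p_n = ∏_{j=1}^{n} (1 + τ^j)/(1 − τ^j) for n ≥ 1. -/

import Mathlib

open Matrix Finset

/-- The θ-method time-discretization matrix `B₁`: lower bidiagonal with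
`(B₁)_{nn} = 1/Δtₙ` and `(B₁)_{n,n-1} = -1/Δtₙ` (0-based indices). -/
noncomputable def timeMatB1 (Nt : ℕ) (dt : Fin Nt → ℝ) : Matrix (Fin Nt) (Fin Nt) ℝ :=
  Matrix.of fun j k =>
    if j = k then 1 / dt j else if (j : ℕ) = (k : ℕ) + 1 then -(1 / dt j) else 0

/-- The θ-method time-discretization matrix `B₂` for the Trapezoidal rule (`θ = 1/2`):
lower bidiagonal with `(B₂)_{nn} = 1/2` and `(B₂)_{n,n-1} = 1/2`. -/
noncomputable def timeMatB2TR (Nt : ℕ) : Matrix (Fin Nt) (Fin Nt) ℝ :=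
  Matrix.of fun j k =>
    if j = k then (1 : ℝ) / 2 else if (j : ℕ) = (k : ℕ) + 1 then (1 : ℝ) / 2 else 0

/-- The unit lower triangular Toeplitz matrix with entries `p_{j-k}` for `j ≥ k`. -/
noncomputable def lowerToeplitz (Nt : ℕ) (p : ℕ → ℝ) : Matrix (Fin Nt) (Fin Nt) ℝ :=
  Matrix.of fun j k => if (k : ℕ) ≤ (j : ℕ) then p ((j : ℕ) - (k : ℕ)) else 0

/-!
The columns of `V` are eigenvectors of the pencil `(B₁, B₂)`: `B₁ V = B₂ V D`. Both `B₂` and `V`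
are lower triangular with nonzero diagonal, hence invertible, and then `B₂⁻¹ B₁ = V D V⁻¹`.
Row `j` of the identity `B₁ V = B₂ V D` only involves rows `j` and `j - 1` of `V`; because the
step sizes are geometric, in column `k` it reduces to the recurrence
`pₙ - pₙ₋₁ = τⁿ (pₙ + pₙ₋₁)` with `n = j - k`, which is exactly `pₙ (1 - τⁿ) = pₙ₋₁ (1 + τⁿ)`.
-/

section LowerBidiagonal

variable {R : Type*} {N : ℕ}

def lowerBidiag [Zero R] (d s : Fin N → R) : Matrix (Fin N) (Fin N) R :=
  Matrix.of fun j k => if j = k then d j else if (j : ℕ) = (k : ℕ) + 1 then s j else 0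

lemma lowerBidiag_isLowerTriangular [Zero R] (d s : Fin N → R) :
    (lowerBidiag d s).IsLowerTriangular := by
  intro j k hjk
  have hlt : j < k := hjk
  simp [lowerBidiag, hlt.ne, show (j : ℕ) ≠ k + 1 by omega]

lemma det_lowerBidiag [CommRing R] (d s : Fin N → R) : (lowerBidiag d s).det = ∏ i, d i := by
  rw [det_of_isLowerTriangular _ (lowerBidiag_isLowerTriangular d s)]
  simp [lowerBidiag]

lemma lowerBidiag_mul_apply_of_val_eq_zero [NonUnitalNonAssocSemiring R] (d s : Fin N → R)
    (W : Matrix (Fin N) (Fin N) R) {j : Fin N} (hj : (j : ℕ) = 0) (k : Fin N) :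
    (lowerBidiag d s * W) j k = d j * W j k := by
  rw [mul_apply, Fintype.sum_eq_single j]
  · simp [lowerBidiag]
  · intro l hl
    simp [lowerBidiag, Ne.symm hl, show (j : ℕ) ≠ l + 1 by omega]

lemma lowerBidiag_mul_apply_of_val_eq_succ [NonUnitalNonAssocSemiring R] (d s : Fin N → R)
    (W : Matrix (Fin N) (Fin N) R) {j j' : Fin N} (hj : (j : ℕ) = j' + 1) (k : Fin N) :
    (lowerBidiag d s * W) j k = d j * W j k + s j * W j' k := by
  have hne : j ≠ j' := fun h => by simp [h] at hj
  rw [mul_apply, Fintype.sum_eq_add j j' hne]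
  · simp [lowerBidiag, hne, hj]
  · rintro l ⟨hl, hl'⟩
    simp [lowerBidiag, Ne.symm hl, show (j : ℕ) ≠ l + 1 from fun h => hl' (Fin.ext (by omega))]

end LowerBidiagonal

lemma timeMatB1_eq_lowerBidiag (N : ℕ) (dt : Fin N → ℝ) :
    timeMatB1 N dt = lowerBidiag (fun j => 1 / dt j) (fun j => -(1 / dt j)) := rfl

lemma timeMatB2TR_eq_lowerBidiag (N : ℕ) :
    timeMatB2TR N = lowerBidiag (fun _ => 1 / 2) (fun _ => 1 / 2) := rfl

lemma det_timeMatB2TR (N : ℕ) : (timeMatB2TR N).det = (1 / 2) ^ N := by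
  simp [timeMatB2TR_eq_lowerBidiag, det_lowerBidiag]

section LowerToeplitz

variable {N : ℕ} (p : ℕ → ℝ)

lemma lowerToeplitz_apply_of_le {j k : Fin N} (h : (k : ℕ) ≤ j) :
    lowerToeplitz N p j k = p (j - k) := if_pos h

lemma lowerToeplitz_apply_of_lt {j k : Fin N} (h : (j : ℕ) < k) :
    lowerToeplitz N p j k = 0 := if_neg (by omega)

lemma det_lowerToeplitz (hp : p 0 = 1) : (lowerToeplitz N p).det = 1 := by
  rw [det_of_isLowerTriangular _ fun j k hjk => lowerToeplitz_apply_of_lt p hjk]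
  simp [lowerToeplitz, hp]

end LowerToeplitz

section TrapezoidCoeff

variable {K : Type*} [Field K] (τ : K)

def trapezoidCoeff (n : ℕ) : K :=
  ∏ j ∈ Icc 1 n, (1 + τ ^ j) / (1 - τ ^ j)

lemma trapezoidCoeff_zero : trapezoidCoeff τ 0 = 1 := by
  simp [trapezoidCoeff]

lemma trapezoidCoeff_succ_sub {n : ℕ} (h : τ ^ (n + 1) ≠ 1) :
    trapezoidCoeff τ (n + 1) - trapezoidCoeff τ n =
      τ ^ (n + 1) * (trapezoidCoeff τ (n + 1) + trapezoidCoeff τ n) := by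
  have hden : 1 - τ ^ (n + 1) ≠ 0 := sub_ne_zero.2 h.symm
  rw [trapezoidCoeff, prod_Icc_succ_top (by omega), ← trapezoidCoeff]
  field_simp
  ring

end TrapezoidCoeff

theorem timeMatB1_mul_lowerToeplitz {N : ℕ} {c τ : ℝ} (hc : c ≠ 0) (hτ : τ ≠ 0) {p : ℕ → ℝ}
    (hp0 : p 0 = 1) (hp : ∀ n, p (n + 1) - p n = τ ^ (n + 1) * (p (n + 1) + p n)) :
    timeMatB1 N (fun n => c * τ ^ (n : ℕ)) * lowerToeplitz N p =
      timeMatB2TR N * (lowerToeplitz N p * diagonal fun n : Fin N => 2 / (c * τ ^ (n : ℕ))) := by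
  ext ⟨j, hj⟩ k
  rw [timeMatB1_eq_lowerBidiag, timeMatB2TR_eq_lowerBidiag]
  cases j with
  | zero =>
    rw [lowerBidiag_mul_apply_of_val_eq_zero _ _ _ rfl,
      lowerBidiag_mul_apply_of_val_eq_zero _ _ _ rfl, mul_diagonal]
    rcases Nat.eq_zero_or_pos k with hk | hk
    · obtain rfl : k = ⟨0, hj⟩ := Fin.ext hk
      simp [lowerToeplitz_apply_of_le, hp0]
      field_simp
    · simp [lowerToeplitz_apply_of_lt p (j := ⟨0, hj⟩) hk]
  | succ m =>
    rw [lowerBidiag_mul_apply_of_val_eq_succ (j' := ⟨m, by omega⟩) _ _ _ rfl,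
      lowerBidiag_mul_apply_of_val_eq_succ (j' := ⟨m, by omega⟩) _ _ _ rfl,
      mul_diagonal, mul_diagonal]
    rcases lt_trichotomy (k : ℕ) (m + 1) with hk | hk | hk
    · obtain ⟨n, hn⟩ : ∃ n, m = k + n := ⟨m - k, by omega⟩
      subst hn
      rw [lowerToeplitz_apply_of_le p (by dsimp; omega),
        lowerToeplitz_apply_of_le p (by dsimp; omega)]
      simp only [Nat.add_sub_cancel_left, show (k : ℕ) + n + 1 = k + (n + 1) by omega, pow_add]
      field_simp
      linear_combination hp n
    · obtain rfl : k = ⟨m + 1, hj⟩ := Fin.ext hk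
      simp [lowerToeplitz_apply_of_le, lowerToeplitz_apply_of_lt, hp0]
      field_simp
    · simp [lowerToeplitz_apply_of_lt p (j := ⟨m + 1, hj⟩) hk,
        lowerToeplitz_apply_of_lt p (j := ⟨m, _⟩) (show m < k by omega)]

lemma Matrix.inv_mul_eq_mul_mul_inv_of_mul_eq {n R : Type*} [Fintype n] [DecidableEq n]
    [CommRing R] {A B V D : Matrix n n R} (hA : IsUnit A.det) (hV : IsUnit V.det)
    (h : B * V = A * (V * D)) :
    A⁻¹ * B = V * D * V⁻¹ := by
  rw [← mul_nonsing_inv_cancel_right V B hV, h, Matrix.mul_assoc A,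
    nonsing_inv_mul_cancel_left A _ hA]

theorem trapezoidal_geometric_diagonalization_general (Nt : ℕ)
    (τ Δt₁ : ℝ) (hτ : 1 < τ) (hΔt₁ : 0 < Δt₁) :
    let dt : Fin Nt → ℝ := fun n => Δt₁ * τ ^ (n : ℕ)
    let p : ℕ → ℝ := fun n => ∏ j ∈ Finset.Icc 1 n, (1 + τ ^ j) / (1 - τ ^ j)
    let V := lowerToeplitz Nt p
    let D := Matrix.diagonal fun n => 2 / dt n
    IsUnit (timeMatB2TR Nt) ∧ IsUnit V ∧
      (timeMatB2TR Nt)⁻¹ * timeMatB1 Nt dt = V * D * V⁻¹ := by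
  intro dt p V D
  have hp0 : p 0 = 1 := trapezoidCoeff_zero τ
  have hB2 : IsUnit (timeMatB2TR Nt).det := by
    rw [det_timeMatB2TR]
    exact isUnit_iff_ne_zero.2 (by positivity)
  have hV : IsUnit V.det := by
    rw [det_lowerToeplitz p hp0]
    exact isUnit_one
  refine ⟨(isUnit_iff_isUnit_det _).2 hB2, (isUnit_iff_isUnit_det _).2 hV,
    inv_mul_eq_mul_mul_inv_of_mul_eq hB2 hV ?_⟩
  exact timeMatB1_mul_lowerToeplitz hΔt₁.ne' (by positivity) hp0 fun n =>
    trapezoidCoeff_succ_sub τ (one_lt_pow₀ hτ n.succ_ne_zero).ne'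

/-- Diagonalization of the Trapezoidal-rule time-stepping matrix `B = B₂⁻¹ B₁` with
geometrically increasing step sizes `Δtₙ = Δt₁ τ^{n-1}`:  `B = V D V⁻¹`, where
`D = diag(2/Δt₁, …, 2/Δt_{N_t})` and `V` is the unit lower triangular Toeplitz matrix
built from `p₀ = 1`, `pₙ = ∏_{j=1}^n (1+τ^j)/(1-τ^j)`. -/
theorem trapezoidal_geometric_diagonalization (Nt : ℕ) (hNt : 1 ≤ Nt)
    (τ Δt₁ : ℝ) (hτ : 1 < τ) (hΔt₁ : 0 < Δt₁) :
    let dt : Fin Nt → ℝ := fun n => Δt₁ * τ ^ (n : ℕ)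
    let p : ℕ → ℝ := fun n => ∏ j ∈ Finset.Icc 1 n, (1 + τ ^ j) / (1 - τ ^ j)
    let V := lowerToeplitz Nt p
    let D := Matrix.diagonal fun n => 2 / dt n
    IsUnit (timeMatB2TR Nt) ∧ IsUnit V ∧
      (timeMatB2TR Nt)⁻¹ * timeMatB1 Nt dt = V * D * V⁻¹ :=
  trapezoidal_geometric_diagonalization_general Nt τ Δt₁ hτ hΔt₁
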